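/- For every (ψ_D, ψ_Σ) ∈ V̂ × V̂, the map ψ ↦ J(ψ_D, ψ) is Fréchet differentiable at ψ_Σ, and its derivative in any direction δ ∈ V̂ equals ⟨ E*(E ψ_Σ − E û(ψ_D)) + S* p , δ ⟩_{V̂}, where the adjoint state p ∈ V is the solution of A* p = γ*(γ u(ψ_Σ) − E ψ_D). -/

import Mathlib

/-!
Each summand of `J` is `½‖f ψ‖²` with `f` affine, so its derivative is `⟨L* f ψ_Σ, ·⟩`, where `L`
is the linear part of `f`. For the first summand `L = γ A⁻¹ S`, and since `(A⁻¹)* = (A*)⁻¹` the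
vector `(A⁻¹)* γ*(γ u(ψ_Σ) − E ψ_D)` is exactly the adjoint state `p`.
-/

open scoped RealInnerProductSpace

variable {V Vh H : Type*}
  [NormedAddCommGroup V] [InnerProductSpace ℝ V] [CompleteSpace V]
  [NormedAddCommGroup Vh] [InnerProductSpace ℝ Vh] [CompleteSpace Vh]
  [NormedAddCommGroup H] [InnerProductSpace ℝ H] [CompleteSpace H]

/-- The state `u(ψ_Σ) = A⁻¹(S ψ_Σ + F)`. -/
noncomputable def stateU (A : V ≃L[ℝ] V) (S : Vh →L[ℝ] V) (F : V) (ψS : Vh) : V :=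
  A.symm (S ψS + F)

/-- The state `û(ψ_D) = Â⁻¹(D̂ ψ_D + G)`. -/
noncomputable def stateUh (Ah : Vh ≃L[ℝ] Vh) (Dh : Vh →L[ℝ] Vh) (G : Vh) (ψD : Vh) : Vh :=
  Ah.symm (Dh ψD + G)

/-- The cost functional `J(ψ_D, ψ_Σ) = ½‖γ u(ψ_Σ) − E ψ_D‖² + ½‖E û(ψ_D) − E ψ_Σ‖²`. -/
noncomputable def costJ (γ : V →L[ℝ] H) (E : Vh →L[ℝ] H)
    (A : V ≃L[ℝ] V) (Ah : Vh ≃L[ℝ] Vh) (S : Vh →L[ℝ] V) (Dh : Vh →L[ℝ] Vh)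
    (F : V) (G : Vh) (ψD ψS : Vh) : ℝ :=
  (1 / 2) * ‖γ (stateU A S F ψS) - E ψD‖ ^ 2
    + (1 / 2) * ‖E (stateUh Ah Dh G ψD) - E ψS‖ ^ 2

theorem HasFDerivAt.half_norm_sq {f : Vh → H} {L : Vh →L[ℝ] H} {x : Vh}
    (hf : HasFDerivAt f L x) :
    HasFDerivAt (fun y => (1 / 2 : ℝ) * ‖f y‖ ^ 2)
      (innerSL ℝ (ContinuousLinearMap.adjoint L (f x))) x := by
  refine (hf.norm_sq.const_mul (1 / 2 : ℝ)).congr_fderiv ?_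
  ext v
  simp [ContinuousLinearMap.adjoint_inner_left]

theorem ContinuousLinearEquiv.adjoint_symm_apply_adjoint_apply (A : V ≃L[ℝ] Vh) (p : Vh) :
    ContinuousLinearMap.adjoint (A.symm : Vh →L[ℝ] V)
      (ContinuousLinearMap.adjoint (A : V →L[ℝ] Vh) p) = p := by
  rw [← ContinuousLinearMap.comp_apply, ← ContinuousLinearMap.adjoint_comp]
  simp [ContinuousLinearMap.adjoint_id]

/-- The map `ψ ↦ J(ψ_D, ψ)` is Fréchet differentiable at `ψ_Σ`, with
derivative `δ ↦ ⟨E*(E ψ_Σ − E û(ψ_D)) + S* p, δ⟩`, where `A* p = γ*(γ u(ψ_Σ) − E ψ_D)`. -/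
theorem costJ_hasFDerivAt_psiS (γ : V →L[ℝ] H) (E : Vh →L[ℝ] H)
    (A : V ≃L[ℝ] V) (Ah : Vh ≃L[ℝ] Vh) (S : Vh →L[ℝ] V) (Dh : Vh →L[ℝ] Vh)
    (F : V) (G : Vh) (ψD ψS : Vh) (p : V)
    (hp : ContinuousLinearMap.adjoint (A : V →L[ℝ] V) p
        = ContinuousLinearMap.adjoint γ (γ (stateU A S F ψS) - E ψD)) :
    HasFDerivAt (fun ψ => costJ γ E A Ah S Dh F G ψD ψ)
      (innerSL ℝ (ContinuousLinearMap.adjoint E (E ψS - E (stateUh Ah Dh G ψD))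
        + ContinuousLinearMap.adjoint S p)) ψS := by
  have hu : HasFDerivAt (stateU A S F) ((A.symm : V →L[ℝ] V).comp S) ψS :=
    (A.symm : V →L[ℝ] V).hasFDerivAt.comp ψS (S.hasFDerivAt.add_const F)
  have hJ := (((γ.hasFDerivAt.comp ψS hu).sub_const (E ψD)).half_norm_sq).add
    ((E.hasFDerivAt.const_sub (E (stateUh Ah Dh G ψD))).half_norm_sq)
  refine hJ.congr_fderiv ?_
  rw [map_add, add_comm]
  simp only [ContinuousLinearMap.adjoint_comp, ContinuousLinearMap.comp_apply, Function.comp_apply]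
  rw [← hp, A.adjoint_symm_apply_adjoint_apply, map_neg, neg_apply, ← map_neg,
    neg_sub]
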